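/- Let p be an odd prime and g ∈ A_n a permutation all of whose nontrivial cycles have length < p, with |supp(g)| ≥ p and |supp(g)| + c*(g) ≤ 2p and n ≥ p. Then g is a product of two p-cycles in A_n. -/

import Mathlib

/-!
Cutting a cycle `(x₁ … xₗ)` at `xₐ` gives `(u x₁ … xₐ)(xₐ … xₗ u) = (x₁ … xₗ)` for any point
`u` outside it. Going through the `k` disjoint cycles of `g` one at a time, and using the last cut
point as the junction `u` for the next cycle, writes `g` as the product of an `m`-cycle and an
`(s + k - m)`-cycle, where `s = |supp g|` and `m` is any number with `k ≤ m ≤ s`. For even `g` the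
number `s + k` is even, so `m = (s + k) / 2 ≤ p` gives two `m`-cycles. Two `m`-cycles `A`, `B` with
`m < p` can then be enlarged to `(m + 1)`-cycles with the same product `A * B`: replace `A` by
`A * (u z)` and `B` by `(u z) * B`, where `u ∈ supp A` and `z ∉ supp A` are chosen so that these are
again cycles (a fresh point `z` if `supp A = supp B`, otherwise `u ∈ supp A \ supp B` and
`z ∈ supp B \ supp A`).
-/

open Equiv Equiv.Perm List
open scoped Finset

namespace List

variable {α : Type*}

theorem exists_eq_append_cons_of_lt_length {l : List α} {i : ℕ} (h : i < l.length) :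
    ∃ xs v ys, l = xs ++ v :: ys ∧ xs.length = i :=
  ⟨l.take i, l[i], l.drop (i + 1), by simp, by simp [h.le]⟩

theorem exists_isRotated_cons_of_mem {l : List α} {u : α} (h : u ∈ l) : ∃ t, l ~r u :: t := by
  obtain ⟨s, t, rfl⟩ := append_of_mem h
  exact ⟨t ++ s, by simpa using isRotated_append (l := s) (l' := u :: t)⟩

theorem exists_isRotated_concat_of_mem {l : List α} {u : α} (h : u ∈ l) :
    ∃ r, l ~r r ++ [u] := by
  obtain ⟨t, ht⟩ := exists_isRotated_cons_of_mem h
  exact ⟨t, ht.trans IsRotated.cons_append_singleton⟩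

variable [DecidableEq α]

theorem formPerm_append_cons (xs : List α) (x : α) (ys : List α) :
    formPerm (xs ++ x :: ys) = formPerm (xs ++ [x]) * formPerm (x :: ys) := by
  induction xs with
  | nil => simp
  | cons a t ih =>
    cases t with
    | nil => simp [formPerm_cons_cons]
    | cons b t => simp_all [formPerm_cons_cons, mul_assoc]

theorem formPerm_cons_concat_mul_formPerm_cons_concat {u v : α} {xs ys : List α}
    (h : (u :: (xs ++ v :: ys)).Nodup) :
    formPerm (u :: (xs ++ [v])) * formPerm (v :: (ys ++ [u])) = formPerm (xs ++ v :: ys) := by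
  have hx : formPerm (u :: (xs ++ [v])) = formPerm (xs ++ [v, u]) :=
    formPerm_eq_of_isRotated (h.sublist (by simp))
      (by simpa using IsRotated.cons_append_singleton (a := u) (l := xs ++ [v]))
  have hy : formPerm (v :: (ys ++ [u])) = formPerm (u :: v :: ys) :=
    (formPerm_eq_of_isRotated (h.sublist ((sublist_append_right xs _).cons_cons u))
      IsRotated.cons_append_singleton).symm
  rw [hx, hy, formPerm_append_pair, formPerm_cons_cons, mul_assoc, ← mul_assoc (Equiv.swap v u),
    Equiv.swap_comm v u, Equiv.swap_mul_self, one_mul]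
  exact (formPerm_append_cons xs v ys).symm

theorem card_support_formPerm [Fintype α] {l : List α} (hl : l.Nodup) (h2 : 2 ≤ l.length) :
    #(formPerm l).support = l.length := by
  rw [support_formPerm_of_nodup l hl (by rintro x rfl; simp at h2), toFinset_card_of_nodup hl]

variable [Fintype α]

theorem exists_formPerm_mul_eq_of_length_lt_card {la lb : List α} (ha : la.Nodup) (hb : lb.Nodup)
    (hlen : la.length = lb.length) (hne : la ≠ []) (hcard : la.length < Fintype.card α) :
    ∃ la' lb' : List α, la'.Nodup ∧ lb'.Nodup ∧ la'.length = la.length + 1 ∧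
      lb'.length = la.length + 1 ∧ formPerm la' * formPerm lb' = formPerm la * formPerm lb := by
  suffices key : ∀ {u z x y : α} {r t : List α}, la ~r r ++ [u] → lb ~r x :: t → z ∉ la → y ∉ lb →
      Equiv.swap y x = Equiv.swap u z →
      ∃ la' lb' : List α, la'.Nodup ∧ lb'.Nodup ∧ la'.length = la.length + 1 ∧
        lb'.length = la.length + 1 ∧ formPerm la' * formPerm lb' = formPerm la * formPerm lb by
    have perm_of_subset {l l' : List α} (hl : l.Nodup) (hl' : l'.length ≤ l.length) (h : l ⊆ l') :
        l ~ l' := (subperm_of_subset hl h).perm_of_length_le hl'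
    by_cases hsub : la ⊆ lb
    · have hperm := perm_of_subset ha hlen.ge hsub
      obtain ⟨u, hu⟩ := exists_mem_of_ne_nil la hne
      obtain ⟨z, hz⟩ := Cardinal.exists_notMem_of_length_lt la (by simpa using hcard)
      obtain ⟨r, hr⟩ := exists_isRotated_concat_of_mem hu
      obtain ⟨t, ht⟩ := exists_isRotated_cons_of_mem (hsub hu)
      exact key hr ht hz (hperm.mem_iff.not.1 hz) (Equiv.swap_comm _ _)
    · obtain ⟨u, hu, hub⟩ : ∃ u ∈ la, u ∉ lb := by simpa [subset_def] using hsub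
      obtain ⟨z, hzb, hza⟩ : ∃ z ∈ lb, z ∉ la := by
        by_contra! h
        exact hub ((perm_of_subset hb hlen.le h).mem_iff.2 hu)
      obtain ⟨r, hr⟩ := exists_isRotated_concat_of_mem hu
      obtain ⟨t, ht⟩ := exists_isRotated_cons_of_mem hzb
      exact key hr ht hza hub rfl
  intro u z x y r t hr ht hz hy hswap
  refine ⟨r ++ [u, z], y :: x :: t, ?_, nodup_cons.2 ⟨ht.mem_iff.not.1 hy, ht.nodup_iff.1 hb⟩,
    by simp [hr.perm.length_eq], by simp [ht.perm.length_eq, hlen], ?_⟩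
  · simpa using (hr.nodup_iff.1 ha).concat (hr.mem_iff.not.1 hz)
  · rw [formPerm_eq_of_isRotated ha hr, formPerm_eq_of_isRotated hb ht, formPerm_append_pair,
      formPerm_cons_cons, hswap, mul_assoc, ← mul_assoc (Equiv.swap u z), Equiv.swap_mul_self,
      one_mul]

theorem exists_formPerm_mul_eq_of_length_le_card {la lb : List α} (ha : la.Nodup) (hb : lb.Nodup)
    (hlen : la.length = lb.length) (hne : la ≠ []) {p : ℕ} (hp : la.length ≤ p)
    (hcard : p ≤ Fintype.card α) :
    ∃ la' lb' : List α, la'.Nodup ∧ lb'.Nodup ∧ la'.length = p ∧ lb'.length = p ∧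
      formPerm la' * formPerm lb' = formPerm la * formPerm lb := by
  induction p, hp using Nat.le_induction with
  | base => exact ⟨la, lb, ha, hb, rfl, hlen.symm, rfl⟩
  | succ q hq ih =>
    obtain ⟨la', lb', ha', hb', hla', hlb', hprod⟩ := ih (by omega)
    obtain ⟨la'', lb'', ha'', hb'', hla'', hlb'', hprod'⟩ :=
      exists_formPerm_mul_eq_of_length_lt_card ha' hb' (hla'.trans hlb'.symm)
        (ne_nil_of_length_pos (by have := length_pos_of_ne_nil hne; omega)) (by omega)
    exact ⟨la'', lb'', ha'', hb'', by omega, by omega, hprod'.trans hprod⟩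

end List

namespace Equiv.Perm

variable {α : Type*} [DecidableEq α] [Fintype α]

def IsLinkedFactorization (τ : Perm α) (a : List α) (u : α) (b : List α) : Prop :=
  (a ++ [u]).Nodup ∧ (u :: b).Nodup ∧ (∀ x ∈ a ++ u :: b, x ∈ τ.support) ∧
    formPerm (a ++ [u]) * formPerm (u :: b) = τ

theorem isLinkedFactorization_formPerm {σ : Perm α} {xs ys : List α} {v : α}
    (hl : (xs ++ v :: ys).Nodup) (hsupp : ∀ x ∈ xs ++ v :: ys, x ∈ σ.support)
    (hσ : formPerm (xs ++ v :: ys) = σ) : IsLinkedFactorization σ xs v ys :=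
  ⟨hl.sublist (by simp), hl.sublist (sublist_append_right xs _), hsupp,
    (formPerm_append_cons xs v ys).symm.trans hσ⟩

theorem IsLinkedFactorization.mul {σ τ : Perm α} {a b : List α} {u : α}
    (h : IsLinkedFactorization τ a u b) (hd : Disjoint σ τ) {xs ys : List α} {v : α}
    (hl : (xs ++ v :: ys).Nodup) (hsupp : ∀ x ∈ xs ++ v :: ys, x ∈ σ.support)
    (hσ : formPerm (xs ++ v :: ys) = σ) :
    IsLinkedFactorization (σ * τ) (a ++ u :: xs) v (ys ++ u :: b) := by
  obtain ⟨ha, hb, hmem, hτ⟩ := h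
  have hτσ : ∀ x ∈ τ.support, x ∉ σ.support := fun x hxτ hxσ =>
    Finset.disjoint_left.1 hd.disjoint_support hxσ hxτ
  have hnot : ∀ x ∈ xs ++ v :: ys, x ∉ a ++ u :: b := fun x hx hx' =>
    hτσ x (hmem x hx') (hsupp x hx)
  refine ⟨?_, ?_, ?_, ?_⟩
  · rw [show a ++ u :: xs ++ [v] = (a ++ [u]) ++ (xs ++ [v]) by simp]
    refine nodup_append.2 ⟨ha, hl.sublist (by simp), ?_⟩
    rintro x hx _ hx' rfl
    exact hnot x (by simp at hx' ⊢; tauto) (by simp at hx ⊢; tauto)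
  · rw [show v :: (ys ++ u :: b) = (v :: ys) ++ (u :: b) by simp]
    refine nodup_append.2 ⟨hl.sublist (sublist_append_right xs _), hb, ?_⟩
    rintro x hx _ hx' rfl
    exact hnot x (by simp at hx ⊢; tauto) (by simp at hx' ⊢; tauto)
  · intro x hx
    have : x ∈ xs ++ v :: ys ∨ x ∈ a ++ u :: b := by simp at hx ⊢; tauto
    rw [hd.support_mul, Finset.mem_union]
    exact this.imp (hsupp x) (hmem x)
  · have hcut := formPerm_cons_concat_mul_formPerm_cons_concat
      (nodup_cons.2 ⟨fun hu => hnot u hu (by simp), hl⟩)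
    have hcomm : Commute (formPerm (a ++ [u])) σ := by
      refine Disjoint.commute fun x => ?_
      by_cases hx : x ∈ a ++ [u]
      · exact Or.inr (notMem_support.1 (hτσ x (hmem x (by simp at hx ⊢; tauto))))
      · exact Or.inl (formPerm_apply_of_notMem hx)
    rw [← hτ, append_assoc, cons_append, formPerm_append_cons a u]
    calc formPerm (a ++ [u]) * formPerm (u :: (xs ++ [v])) * formPerm (v :: (ys ++ u :: b))
        = formPerm (a ++ [u]) * (formPerm (u :: (xs ++ [v])) * formPerm (v :: (ys ++ [u]))) *
            formPerm (u :: b) := by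
          rw [show v :: (ys ++ u :: b) = (v :: ys) ++ u :: b from rfl,
            formPerm_append_cons (v :: ys) u b]
          simp only [mul_assoc]; rfl
      _ = σ * (formPerm (a ++ [u]) * formPerm (u :: b)) := by rw [hcut, hσ, hcomm.eq, mul_assoc]

theorem IsCycle.exists_formPerm_eq_append_cons {σ : Perm α} (hσ : σ.IsCycle) {i : ℕ}
    (hi : i < #σ.support) :
    ∃ xs v ys, (xs ++ v :: ys).Nodup ∧ (∀ x ∈ xs ++ v :: ys, x ∈ σ.support) ∧
      formPerm (xs ++ v :: ys) = σ ∧ xs.length = i ∧ xs.length + ys.length + 1 = #σ.support := by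
  obtain ⟨x, hx⟩ := hσ.nonempty_support
  have hcyc : σ.cycleOf x = σ := hσ.cycleOf_eq (mem_support.1 hx)
  have hlen : (σ.toList x).length = #σ.support := by rw [length_toList, hcyc]
  obtain ⟨xs, v, ys, hl, hxs⟩ := exists_eq_append_cons_of_lt_length (hlen ▸ hi)
  refine ⟨xs, v, ys, hl ▸ nodup_toList σ x, fun y hy => ?_, by rw [← hl, formPerm_toList, hcyc],
    hxs, by rw [hl, length_append, length_cons] at hlen; omega⟩
  rw [← hl, mem_toList_iff] at hy
  exact hy.1.mem_support_iff.1 hy.2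

theorem IsCycle.exists_isLinkedFactorization {σ : Perm α} (hσ : σ.IsCycle) {m : ℕ} (hm : 1 ≤ m)
    (hms : m ≤ #σ.support) :
    ∃ a u b, IsLinkedFactorization σ a u b ∧ a.length + 1 = m ∧
      a.length + b.length + 1 = #σ.support := by
  obtain ⟨xs, v, ys, hl, hsupp, hσl, hxs, hlen⟩ := hσ.exists_formPerm_eq_append_cons (i := m - 1)
    (by omega)
  exact ⟨xs, v, ys, isLinkedFactorization_formPerm hl hsupp hσl, by omega, hlen⟩

theorem two_mul_card_cycleType_le (σ : Perm α) : 2 * Multiset.card σ.cycleType ≤ #σ.support := by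
  rw [← sum_cycleType, mul_comm]
  exact Multiset.card_nsmul_le_sum fun _ => two_le_of_mem_cycleType

theorem exists_isLinkedFactorization {τ : Perm α} (hτ : τ ≠ 1) {m : ℕ}
    (hkm : Multiset.card τ.cycleType ≤ m) (hms : m ≤ #τ.support) :
    ∃ a u b, IsLinkedFactorization τ a u b ∧ a.length + 1 = m ∧
      a.length + b.length + 2 = #τ.support + Multiset.card τ.cycleType := by
  induction τ using cycle_induction_on generalizing m with
  | base_one => exact absurd rfl hτ
  | base_cycles σ hσ =>
    rw [hσ.cycleType, Multiset.card_singleton] at hkm ⊢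
    simpa using hσ.exists_isLinkedFactorization hkm hms
  | induction_disjoint σ τ hd hσ _ ih =>
    by_cases hτ1 : τ = 1
    · simp only [hτ1, mul_one] at hkm hms ⊢
      rw [hσ.cycleType, Multiset.card_singleton] at hkm ⊢
      simpa using hσ.exists_isLinkedFactorization hkm hms
    rw [hd.cycleType_mul, hσ.cycleType, Multiset.card_add, Multiset.card_singleton] at hkm ⊢
    rw [hd.card_support_mul] at hms ⊢
    have hσ2 := hσ.two_le_card_support
    have hτ2 := two_mul_card_cycleType_le τ
    set c := min #σ.support (m - Multiset.card τ.cycleType) with hc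
    obtain ⟨a, u, b, hτf, ha, hab⟩ := ih hτ1 (m := m - c) (by omega) (by omega)
    obtain ⟨xs, v, ys, hl, hsupp, hσl, hxs, hlen⟩ := hσ.exists_formPerm_eq_append_cons (i := c - 1)
      (by omega)
    exact ⟨a ++ u :: xs, v, ys ++ u :: b, hτf.mul hd hl hsupp hσl, by simp; omega, by simp; omega⟩

theorem even_card_support_add_card_cycleType {g : Perm α} (hg : g ∈ alternatingGroup α) :
    Even (#g.support + Multiset.card g.cycleType) := by
  rw [mem_alternatingGroup, sign_of_cycleType, sum_cycleType] at hg
  exact (neg_one_pow_eq_one_iff_even (by decide)).1 hg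

theorem exists_isCycle_mul_eq_of_mem_alternatingGroup {g : Perm α} (hg : g ∈ alternatingGroup α)
    (hg1 : g ≠ 1) {p : ℕ} (hsum : #g.support + Multiset.card g.cycleType ≤ 2 * p)
    (hp : p ≤ Fintype.card α) :
    ∃ A B : Perm α, A.IsCycle ∧ #A.support = p ∧ B.IsCycle ∧ #B.support = p ∧ g = A * B := by
  obtain ⟨m, hm⟩ := even_card_support_add_card_cycleType hg
  have hk := two_mul_card_cycleType_le g
  have hk1 := card_cycleType_pos.2 hg1
  obtain ⟨a, u, b, ⟨ha, hb, -, hab⟩, hlen_a, hlen_ab⟩ :=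
    exists_isLinkedFactorization hg1 (m := m) (by omega) (by omega)
  obtain ⟨la, lb, hla, hlb, hlen_la, hlen_lb, hprod⟩ :=
    exists_formPerm_mul_eq_of_length_le_card ha hb (by simp; omega) (by simp) (by simp; omega) hp
  have hp2 : 2 ≤ p := by omega
  exact ⟨formPerm la, formPerm lb, isCycle_formPerm hla (by omega),
    by rw [card_support_formPerm hla (by omega), hlen_la], isCycle_formPerm hlb (by omega),
    by rw [card_support_formPerm hlb (by omega), hlen_lb], (hprod.trans hab).symm⟩

end Equiv.Perm

theorem small_cycles_two_p_cycles_general (p n : ℕ) (hp : p.Prime)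
    (hn : p ≤ n) (g : Equiv.Perm (Fin n)) (hg : g ∈ alternatingGroup (Fin n))
    (hsupp : p ≤ g.support.card)
    (hsum : g.support.card + g.cycleType.card ≤ 2 * p) :
    ∃ A B : Equiv.Perm (Fin n), A.IsCycle ∧ A.support.card = p ∧
      B.IsCycle ∧ B.support.card = p ∧ g = A * B := by
  have hg1 : g ≠ 1 := by
    rintro rfl
    exact hp.ne_zero (by simpa using hsupp)
  exact exists_isCycle_mul_eq_of_mem_alternatingGroup hg hg1 hsum (by simpa using hn)

/-- If all nontrivial cycles of `g ∈ A_n` have length `< p`, with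
`|supp g| ≥ p` and `|supp g| + c*(g) ≤ 2p`, then `g` is a product of two `p`-cycles. -/
theorem small_cycles_two_p_cycles (p n : ℕ) (hp : p.Prime) (hodd : Odd p)
    (hn : p ≤ n) (g : Equiv.Perm (Fin n)) (hg : g ∈ alternatingGroup (Fin n))
    (hcyc : ∀ c ∈ g.cycleType, c < p) (hsupp : p ≤ g.support.card)
    (hsum : g.support.card + g.cycleType.card ≤ 2 * p) :
    ∃ A B : Equiv.Perm (Fin n), A.IsCycle ∧ A.support.card = p ∧
      B.IsCycle ∧ B.support.card = p ∧ g = A * B :=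
  small_cycles_two_p_cycles_general p n hp hn g hg hsupp hsum
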